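/- Let c ≥ 1 be a real number and let f : ℝ → ℝ satisfy the functional equation (f(x))³ = 1 + 3x + x² f(x+2) for all x ≥ 1, together with the bounds c⁻¹(x+1) ≤ f(x) ≤ c(x+1) for all x ≥ 1. Then c^{-1/3}(x+1) ≤ f(x) ≤ c^{1/3}(x+1) for all x ≥ 1. -/
import Mathlib


theorem bounds_improve_one_step (c : ℝ) (hc : 1 ≤ c) (f : ℝ → ℝ)
    (hfe : ∀ x : ℝ, 1 ≤ x → (f x) ^ 3 = 1 + 3 * x + x ^ 2 * f (x + 2))
    (hlb : ∀ x : ℝ, 1 ≤ x → c⁻¹ * (x + 1) ≤ f x)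
    (hub : ∀ x : ℝ, 1 ≤ x → f x ≤ c * (x + 1)) :
    ∀ x : ℝ, 1 ≤ x →
      c ^ (-(1 / 3) : ℝ) * (x + 1) ≤ f x ∧ f x ≤ c ^ ((1 / 3) : ℝ) * (x + 1) := by
  intro x hx
  have hx3 : (1:ℝ) ≤ x + 2 := by linarith
  have hc0 : (0:ℝ) < c := by linarith
  have hci : c⁻¹ ≤ 1 := inv_le_one_of_one_le₀ hc
  have hci0 : 0 < c⁻¹ := inv_pos.mpr hc0
  have hcube : ((c ^ ((1 / 3 : ℝ))) ^ 3 : ℝ) = c := by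
    rw [← Real.rpow_natCast (c ^ ((1/3 : ℝ))) 3, ← Real.rpow_mul hc0.le]
    norm_num
  have hcube' : ((c ^ (-(1 / 3) : ℝ)) ^ 3 : ℝ) = c⁻¹ := by
    rw [← Real.rpow_natCast (c ^ (-(1/3) : ℝ)) 3, ← Real.rpow_mul hc0.le]
    norm_num [Real.rpow_neg_one]
  have he := hfe x hx
  have h1 : f x ^ 3 ≤ c * (x + 1) ^ 3 := by
    have h := hub (x + 2) hx3
    nlinarith [sq_nonneg x, sq_nonneg (x + 1)]
  have h2 : c⁻¹ * (x + 1) ^ 3 ≤ f x ^ 3 := by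
    have h := hlb (x + 2) hx3
    nlinarith [sq_nonneg x, sq_nonneg (x + 1)]
  have hodd : Odd (3:ℕ) := by decide
  constructor
  · have : (c ^ (-(1 / 3) : ℝ) * (x + 1)) ^ 3 ≤ f x ^ 3 := by
      rw [mul_pow, hcube']; exact h2
    exact (hodd.strictMono_pow (R := ℝ)).le_iff_le.mp this
  · have : f x ^ 3 ≤ (c ^ ((1 / 3) : ℝ) * (x + 1)) ^ 3 := by
      rw [mul_pow, hcube]; exact h1
    exact (hodd.strictMono_pow (R := ℝ)).le_iff_le.mp this
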